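/- arXiv:2412.07475 — 4 statements merged into one kernel-verified Lean document; each statement's English description precedes it below -/
import Mathlib

section
/- Let 𝒮 and 𝒯 be limit sketches and let C be a category admitting, for every small category J that indexes a designated cone of 𝒮 or of 𝒯, all limits of shape J. Then the currying isomorphism between functor categories Fun(S, Fun(T, C)) ≅ Fun(T, Fun(S, C)) restricts to an isomorphism of categories Mod(𝒮, Mod(𝒯, C)) ≅ Mod(𝒯, Mod(𝒮, C)), where on each side 'model' means a functor carrying every designated cone of the sketch to a limit cone in the indicated category of models. (Strict, Set-enriched instance of the paper's symmetry-of-internalisation theorem.) -/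
open CategoryTheory CategoryTheory.Limits

structure SketchCone.{s, a, b} (S : Type a) [Category.{b} S] :
    Type (max a b (s + 1)) where
  J : Type s
  [instJ : SmallCategory J]
  D : J ⥤ S
  cone : Limits.Cone D

attribute [instance] SketchCone.instJ

structure Sketch.{s} : Type (s + 1) where
  S : Type s
  [inst : SmallCategory S]
  cones : Set (SketchCone.{s, s, s} S)

attribute [instance] Sketch.inst

universe u v w

def IsModel (𝒮 : Sketch.{u}) (C : Type v) [Category.{w} C] (F : 𝒮.S ⥤ C) : Prop :=
  ∀ c ∈ 𝒮.cones, Nonempty (Limits.IsLimit (F.mapCone c.cone))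

abbrev ModelsCat (𝒮 : Sketch.{u}) (C : Type v) [Category.{w} C] :=
  ObjectProperty.FullSubcategory (IsModel 𝒮 C)

def modForget (𝒮 𝒯 : Sketch.{u}) (C : Type v) [Category.{w} C] :
    ModelsCat 𝒮 (ModelsCat 𝒯 C) ⥤ 𝒮.S ⥤ 𝒯.S ⥤ C :=
  ObjectProperty.ι (IsModel 𝒮 (ModelsCat 𝒯 C)) ⋙
    (Functor.whiskeringRight 𝒮.S (ModelsCat 𝒯 C) (𝒯.S ⥤ C)).obj (ObjectProperty.ι (IsModel 𝒯 C))

def flipFunctor' (A : Type*) [Category A] (B : Type*) [Category B] (E : Type*) [Category E] :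
    (A ⥤ B ⥤ E) ⥤ B ⥤ A ⥤ E where
  obj F := F.flip
  map α :=
    { app := fun b =>
        { app := fun a => (α.app a).app b
          naturality := fun _ _ f => congrArg (fun t => NatTrans.app t b) (α.naturality f) } }

/-! Flipping `F : 𝒮.S ⥤ 𝒯.S ⥤ C` preserves the model conditions. A model of `𝒮` in `Mod(𝒯, C)`
sends designated cones to limits in `Mod(𝒯, C)`; these are computed pointwise in `C` because
`𝒯`-models are closed under limits (limits commute with limits), so every `F.flip.obj t` is an
`𝒮`-model. Conversely, limits in the full subcategory `Mod(𝒮, C)` of a functor category are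
detected pointwise, so since every `F.obj s` is a `𝒯`-model, `F.flip` is a `𝒯`-model. Flipping
twice is the identity on the nose. -/

noncomputable def isLimitConePtMapCone {J J' T C : Type*} [Category J] [Category J'] [Category T]
    [Category C] [HasLimitsOfShape J C] {K : J ⥤ T ⥤ C} {c : Cone K}
    (hc : IsLimit c) {D : J' ⥤ T} {e : Cone D} (he : ∀ j, IsLimit ((K.obj j).mapCone e)) :
    IsLimit (c.pt.mapCone e) :=
  let hflip : IsLimit (K.flip.mapCone e) := evaluationJointlyReflectsLimits _ he
  let iso : K.flip ⋙ lim ≅ c.pt :=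
    (limitIsoFlipCompLim K).symm ≪≫ (limit.isLimit K).conePointUniqueUpToIso hc
  IsLimit.mapConeEquiv iso (isLimitOfPreserves lim hflip)

instance isModel_isClosedUnderLimitsOfShape (𝒯 : Sketch.{u}) (C : Type v) [Category.{w} C]
    (J : Type*) [Category J] [HasLimitsOfShape J C] :
    ObjectProperty.IsClosedUnderLimitsOfShape (IsModel 𝒯 C) J where
  limitsOfShape_le := by
    rintro X ⟨h⟩ d hd
    exact ⟨isLimitConePtMapCone (c := Cone.mk X h.π) h.isLimit
      fun j => (h.prop_diag_obj j d hd).some⟩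

variable {𝒮 𝒯 : Sketch.{u}} {C : Type v} [Category.{w} C]

theorem isModel_flip_obj (hS : ∀ c ∈ 𝒮.cones, HasLimitsOfShape c.J C)
    (F : ModelsCat 𝒮 (ModelsCat 𝒯 C)) (t : 𝒯.S) :
    IsModel 𝒮 C (((modForget 𝒮 𝒯 C).obj F).flip.obj t) := fun c hc =>
  have := hS c hc
  ⟨isLimitOfPreserves ((evaluation 𝒯.S C).obj t)
    (isLimitOfPreserves (ObjectProperty.ι (IsModel 𝒯 C)) (F.property c hc).some)⟩

theorem isModel_lift_flip (G : 𝒮.S ⥤ 𝒯.S ⥤ C) (hG : ∀ s, IsModel 𝒯 C (G.obj s))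
    (hG' : ∀ t, IsModel 𝒮 C (G.flip.obj t)) :
    IsModel 𝒯 (ModelsCat 𝒮 C) (ObjectProperty.lift (IsModel 𝒮 C) G.flip hG') := fun d hd =>
  ⟨isLimitOfReflects (ObjectProperty.ι (IsModel 𝒮 C))
    (evaluationJointlyReflectsLimits _ fun s => (hG s d hd).some)⟩

variable (𝒮 𝒯 C) in
def flipModels (hS : ∀ c ∈ 𝒮.cones, HasLimitsOfShape c.J C) :
    ModelsCat 𝒮 (ModelsCat 𝒯 C) ⥤ ModelsCat 𝒯 (ModelsCat 𝒮 C) where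
  obj F := ⟨_, isModel_lift_flip _ (fun s => (F.obj.obj s).property) (isModel_flip_obj hS F)⟩
  map α :=
    let β := (flipFunctor' 𝒮.S 𝒯.S C).map ((modForget 𝒮 𝒯 C).map α)
    ObjectProperty.homMk
      { app t := ObjectProperty.homMk (β.app t)
        naturality _ _ f := ObjectProperty.hom_ext _ (β.naturality f) }

theorem stmt0 (𝒮 𝒯 : Sketch.{u}) (C : Type v) [Category.{w} C]
    (hS : ∀ c ∈ 𝒮.cones, Limits.HasLimitsOfShape c.J C)
    (hT : ∀ c ∈ 𝒯.cones, Limits.HasLimitsOfShape c.J C) :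
    ∃ (Φ : ModelsCat 𝒮 (ModelsCat 𝒯 C) ⥤ ModelsCat 𝒯 (ModelsCat 𝒮 C))
      (Ψ : ModelsCat 𝒯 (ModelsCat 𝒮 C) ⥤ ModelsCat 𝒮 (ModelsCat 𝒯 C)),
      Φ ⋙ Ψ = 𝟭 (ModelsCat 𝒮 (ModelsCat 𝒯 C)) ∧
      Ψ ⋙ Φ = 𝟭 (ModelsCat 𝒯 (ModelsCat 𝒮 C)) ∧
      modForget 𝒮 𝒯 C ⋙ flipFunctor' 𝒮.S 𝒯.S C = Φ ⋙ modForget 𝒯 𝒮 C :=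
  ⟨flipModels 𝒮 𝒯 C hS, flipModels 𝒯 𝒮 C hT, rfl, rfl, rfl⟩
end

section
/- Let 𝒮 and 𝒯 be limit sketches and let C be a category admitting, for every small category J that indexes a designated cone of 𝒮 or of 𝒯, all limits of shape J. Then a functor F : S × T ⥤ C is a model of the tensor product sketch 𝒮 ⊠ 𝒯 if and only if F(−, t) is a model of 𝒮 for every object t of T and F(s, −) is a model of 𝒯 for every object s of S, and the currying isomorphism Fun(S × T, C) ≅ Fun(S, Fun(T, C)) restricts to an isomorphism of categories Mod(𝒮 ⊠ 𝒯, C) ≅ Mod(𝒮, Mod(𝒯, C)). -/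
open CategoryTheory CategoryTheory.Limits

universe u v w

/-- Transport a designated-cone datum along a functor. -/
def SketchCone.map {S : Type a} [Category.{b} S] {C : Type a'} [Category.{b'} C]
    (c : SketchCone.{s} S) (F : S ⥤ C) : SketchCone.{s} C where
  J := c.J
  D := c.D ⋙ F
  cone := F.mapCone c.cone

/-- The tensor product of limit sketches.  Its underlying category is `S × T`, and its
designated cones are: for each designated cone `(J, D, X, γ)` of `𝒮` and each object `t` of
`T`, the cone over `(D, Δt) : J ⥤ S × T` with apex `(X, t)` and legs `(γ_j, 1_t)` (that is,
the image of the cone under the functor `sectL S t : S ⥤ S × T`); together with the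
analogous cones obtained from the designated cones of `𝒯` and objects of `S`. -/
def Sketch.tensor (𝒮 𝒯 : Sketch.{u}) : Sketch.{u} where
  S := 𝒮.S × 𝒯.S
  cones :=
    (⋃ t : 𝒯.S, (fun c => SketchCone.map c (Prod.sectL 𝒮.S t)) '' 𝒮.cones) ∪
    (⋃ s : 𝒮.S, (fun c => SketchCone.map c (Prod.sectR s 𝒯.S)) '' 𝒯.cones)

/-!
Under currying, the designated cones of `𝒮 ⊠ 𝒯` are the cones of `𝒮` at a fixed `t` and those
of `𝒯` at a fixed `s`, so models of `𝒮 ⊠ 𝒯` are the functors whose partial functors are models.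
It remains to see that a functor `S ⥤ Mod(𝒯, C)` is a model of `𝒮` exactly when all its
evaluations at objects of `T` are. Limits in `T ⥤ C` are computed pointwise, and `Mod(𝒯, C)` is
closed in `T ⥤ C` under limits of the shapes of `𝒮` because limits commute with limits.
-/

namespace CategoryTheory

universe u₁ v₁ u₂ v₂ u₃ v₃ u₄ v₄

variable {A : Type u₁} [Category.{v₁} A] {D : Type u₂} [Category.{v₂} D]
  {E : Type u₃} [Category.{v₃} E]

theorem Functor.comp_right_cancel {K : D ⥤ E} [K.Faithful] (hK : Function.Injective K.obj)
    {F G : A ⥤ D} (h : F ⋙ K = G ⋙ K) : F = G := by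
  refine Functor.ext (fun X => hK (Functor.congr_obj h X)) fun X Y f => K.map_injective ?_
  simpa [eqToHom_map] using Functor.congr_hom h f

theorem ObjectProperty.ι_obj_injective (P : ObjectProperty D) : Function.Injective P.ι.obj := by
  rintro ⟨X, _⟩ ⟨Y, _⟩ (rfl : X = Y)
  rfl

def ObjectProperty.liftPointwise {S : Type u₄} [Category.{v₄} S] (P : ObjectProperty D)
    (F : A ⥤ S ⥤ D) (hF : ∀ X s, P ((F.obj X).obj s)) : A ⥤ S ⥤ P.FullSubcategory where
  obj X := P.lift (F.obj X) (hF X)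
  map f :=
    { app s := ObjectProperty.homMk ((F.map f).app s)
      naturality _ _ g := by ext1; exact (F.map f).naturality g }

theorem Functor.curry_comp_uncurry :
    (Functor.curry : (A × D ⥤ E) ⥤ _) ⋙ Functor.uncurry = 𝟭 (A × D ⥤ E) := by
  refine Functor.ext Functor.uncurry_obj_curry_obj fun F G α => ?_
  ext
  simp [eqToHom_app]

theorem Functor.uncurry_comp_curry :
    (Functor.uncurry : (A ⥤ D ⥤ E) ⥤ _) ⋙ Functor.curry = 𝟭 (A ⥤ D ⥤ E) := by
  refine Functor.ext Functor.curry_obj_uncurry_obj fun F G α => ?_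
  ext
  simp [eqToHom_app]

end CategoryTheory

section Models

variable {𝒮 𝒯 : Sketch.{u}} {C : Type v} [Category.{w} C]

theorem isModel_tensor_iff (F : 𝒮.S × 𝒯.S ⥤ C) :
    IsModel (𝒮.tensor 𝒯) C F ↔
      (∀ t : 𝒯.S, IsModel 𝒮 C (Prod.sectL 𝒮.S t ⋙ F)) ∧
        ∀ s : 𝒮.S, IsModel 𝒯 C (Prod.sectR s 𝒯.S ⋙ F) := by
  refine ⟨fun h => ⟨fun t c hc => ?_, fun s c hc => ?_⟩, ?_⟩
  · exact h (c.map (Prod.sectL 𝒮.S t)) (.inl (Set.mem_iUnion.2 ⟨t, Set.mem_image_of_mem _ hc⟩))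
  · exact h (c.map (Prod.sectR s 𝒯.S)) (.inr (Set.mem_iUnion.2 ⟨s, Set.mem_image_of_mem _ hc⟩))
  · rintro ⟨hL, hR⟩ _ (hc | hc)
    · obtain ⟨t, c, hcS, rfl⟩ := Set.mem_iUnion.1 hc
      exact hL t c hcS
    · obtain ⟨s, c, hcT, rfl⟩ := Set.mem_iUnion.1 hc
      exact hR s c hcT

-- `Prod.sectL 𝒮.S t ⋙ F` and `(curry.obj F).flip.obj t` agree definitionally, as do the `sectR`s.
theorem isModel_tensor_iff_curry (F : 𝒮.S × 𝒯.S ⥤ C) :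
    IsModel (𝒮.tensor 𝒯) C F ↔
      (∀ t : 𝒯.S, IsModel 𝒮 C ((Functor.curry.obj F).flip.obj t)) ∧
        ∀ s : 𝒮.S, IsModel 𝒯 C ((Functor.curry.obj F).obj s) :=
  isModel_tensor_iff F

theorem isModel_tensor_uncurry_iff (H : 𝒮.S ⥤ 𝒯.S ⥤ C) :
    IsModel (𝒮.tensor 𝒯) C (Functor.uncurry.obj H) ↔
      (∀ t : 𝒯.S, IsModel 𝒮 C (H.flip.obj t)) ∧ ∀ s : 𝒮.S, IsModel 𝒯 C (H.obj s) := by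
  rw [isModel_tensor_iff_curry, Functor.curry_obj_uncurry_obj]

end Models

section Transfer

variable {𝒮 : Sketch.{u}} {D : Type v} [Category.{w} D] {E : Type*} [Category E]
  {G : 𝒮.S ⥤ D}

theorem IsModel.comp (hG : IsModel 𝒮 D G) (K : D ⥤ E)
    (hK : ∀ c ∈ 𝒮.cones, PreservesLimitsOfShape c.J K) : IsModel 𝒮 E (G ⋙ K) := fun c hc =>
  have := hK c hc
  ⟨isLimitOfPreserves K (hG c hc).some⟩

theorem IsModel.of_comp (K : D ⥤ E) [ReflectsLimitsOfSize.{u, u} K] (h : IsModel 𝒮 E (G ⋙ K)) :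
    IsModel 𝒮 D G := fun c hc =>
  ⟨isLimitOfReflects K (h c hc).some⟩

variable {T : Type*} [Category T]

theorem isModel_of_forall_isModel_flip_obj (G : 𝒮.S ⥤ T ⥤ D)
    (h : ∀ t, IsModel 𝒮 D (G.flip.obj t)) : IsModel 𝒮 (T ⥤ D) G := fun c hc =>
  ⟨evaluationJointlyReflectsLimits _ fun t => (h t c hc).some⟩

theorem IsModel.flip_obj (hD : ∀ c ∈ 𝒮.cones, HasLimitsOfShape c.J D) {G : 𝒮.S ⥤ T ⥤ D}
    (hG : IsModel 𝒮 (T ⥤ D) G) (t : T) : IsModel 𝒮 D (G.flip.obj t) :=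
  hG.comp ((evaluation T D).obj t) fun c hc => have := hD c hc; inferInstance

end Transfer

theorem isClosedUnderLimitsOfShape_isModel (𝒯 : Sketch.{u}) (C : Type v) [Category.{w} C]
    (J : Type*) [Category J] [HasLimitsOfShape J C] :
    ObjectProperty.IsClosedUnderLimitsOfShape (IsModel 𝒯 C) J := by
  refine ⟨fun X ⟨p⟩ d hd => ?_⟩
  let K := p.diag
  have hK : IsLimit (K.flip.mapCone d.cone) :=
    evaluationJointlyReflectsLimits _ fun j => (p.prop_diag_obj j d hd).some
  let e : K.flip ⋙ lim ≅ X :=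
    (limitIsoFlipCompLim K).symm ≪≫ (limit.isLimit K).conePointUniqueUpToIso p.isLimit
  exact ⟨IsLimit.mapConeEquiv e (isLimitOfPreserves lim hK)⟩

section Currying

variable {𝒮 𝒯 : Sketch.{u}} {C : Type v} [Category.{w} C]

theorem IsModel.comp_ι (hS : ∀ c ∈ 𝒮.cones, HasLimitsOfShape c.J C)
    {G : 𝒮.S ⥤ ModelsCat 𝒯 C} (hG : IsModel 𝒮 (ModelsCat 𝒯 C) G) :
    IsModel 𝒮 (𝒯.S ⥤ C) (G ⋙ ObjectProperty.ι _) :=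
  hG.comp _ fun c hc =>
    have := hS c hc
    have := isClosedUnderLimitsOfShape_isModel 𝒯 C c.J
    inferInstance

variable (𝒮 𝒯 C) in
def curryModels : ModelsCat (𝒮.tensor 𝒯) C ⥤ ModelsCat 𝒮 (ModelsCat 𝒯 C) :=
  ObjectProperty.lift _
    (ObjectProperty.liftPointwise (IsModel 𝒯 C) (ObjectProperty.ι _ ⋙ Functor.curry)
      fun F => ((isModel_tensor_iff_curry F.obj).1 F.property).2)
    fun F => .of_comp (ObjectProperty.ι _)
      (isModel_of_forall_isModel_flip_obj _ ((isModel_tensor_iff_curry F.obj).1 F.property).1)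

def uncurryModels (hS : ∀ c ∈ 𝒮.cones, HasLimitsOfShape c.J C) :
    ModelsCat 𝒮 (ModelsCat 𝒯 C) ⥤ ModelsCat (𝒮.tensor 𝒯) C :=
  ObjectProperty.lift _ (modForget 𝒮 𝒯 C ⋙ Functor.uncurry) fun G =>
    (isModel_tensor_uncurry_iff _).2
      ⟨(G.property.comp_ι hS).flip_obj hS, fun s => (G.obj.obj s).property⟩

instance : (modForget 𝒮 𝒯 C).Faithful :=
  Functor.Faithful.comp _ _

theorem modForget_obj_injective : Function.Injective (modForget 𝒮 𝒯 C).obj := fun _ _ h =>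
  ObjectProperty.ι_obj_injective _ (Functor.comp_right_cancel (ObjectProperty.ι_obj_injective _) h)

end Currying

theorem stmt2_general (𝒮 𝒯 : Sketch.{u}) (C : Type v) [Category.{w} C]
    (hS : ∀ c ∈ 𝒮.cones, Limits.HasLimitsOfShape c.J C) :
    (∀ F : 𝒮.S × 𝒯.S ⥤ C,
      IsModel (𝒮.tensor 𝒯) C F ↔
        ((∀ t : 𝒯.S, IsModel 𝒮 C (Prod.sectL 𝒮.S t ⋙ F)) ∧
         (∀ s : 𝒮.S, IsModel 𝒯 C (Prod.sectR s 𝒯.S ⋙ F)))) ∧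
    ∃ (Φ : ModelsCat (𝒮.tensor 𝒯) C ⥤ ModelsCat 𝒮 (ModelsCat 𝒯 C))
      (Ψ : ModelsCat 𝒮 (ModelsCat 𝒯 C) ⥤ ModelsCat (𝒮.tensor 𝒯) C),
      Φ ⋙ Ψ = 𝟭 (ModelsCat (𝒮.tensor 𝒯) C) ∧
      Ψ ⋙ Φ = 𝟭 (ModelsCat 𝒮 (ModelsCat 𝒯 C)) ∧
      ObjectProperty.ι (IsModel (𝒮.tensor 𝒯) C) ⋙ Functor.curry =
        Φ ⋙ modForget 𝒮 𝒯 C := by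
  refine ⟨isModel_tensor_iff, curryModels 𝒮 𝒯 C, uncurryModels hS, ?_, ?_, rfl⟩
  · apply Functor.comp_right_cancel (ObjectProperty.ι_obj_injective _)
    exact congrArg (ObjectProperty.ι _ ⋙ ·) Functor.curry_comp_uncurry
  · apply Functor.comp_right_cancel modForget_obj_injective
    exact congrArg (modForget 𝒮 𝒯 C ⋙ ·) Functor.uncurry_comp_curry

/-- A functor `F : S × T ⥤ C` is a model of the tensor product sketch
`𝒮 ⊠ 𝒯` iff all its partial functors are models, and the currying isomorphism restricts to
an isomorphism of categories `Mod(𝒮 ⊠ 𝒯, C) ≅ Mod(𝒮, Mod(𝒯, C))`. -/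
theorem stmt2 (𝒮 𝒯 : Sketch.{u}) (C : Type v) [Category.{w} C]
    (hS : ∀ c ∈ 𝒮.cones, Limits.HasLimitsOfShape c.J C)
    (hT : ∀ c ∈ 𝒯.cones, Limits.HasLimitsOfShape c.J C) :
    (∀ F : 𝒮.S × 𝒯.S ⥤ C,
      IsModel (𝒮.tensor 𝒯) C F ↔
        ((∀ t : 𝒯.S, IsModel 𝒮 C (Prod.sectL 𝒮.S t ⋙ F)) ∧
         (∀ s : 𝒮.S, IsModel 𝒯 C (Prod.sectR s 𝒯.S ⋙ F)))) ∧
    ∃ (Φ : ModelsCat (𝒮.tensor 𝒯) C ⥤ ModelsCat 𝒮 (ModelsCat 𝒯 C))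
      (Ψ : ModelsCat 𝒮 (ModelsCat 𝒯 C) ⥤ ModelsCat (𝒮.tensor 𝒯) C),
      Φ ⋙ Ψ = 𝟭 (ModelsCat (𝒮.tensor 𝒯) C) ∧
      Ψ ⋙ Φ = 𝟭 (ModelsCat 𝒮 (ModelsCat 𝒯 C)) ∧
      ObjectProperty.ι (IsModel (𝒮.tensor 𝒯) C) ⋙ Functor.curry =
        Φ ⋙ modForget 𝒮 𝒯 C :=
  stmt2_general 𝒮 𝒯 C hS
end

section
/- The category Sk of small limit sketches and sketch morphisms carries a monoidal structure whose tensor is 𝒮 ⊠ 𝒯 and whose unit is the sketch on the terminal category (one object, only the identity morphism) with no designated cones; moreover this monoidal structure is closed, with internal hom ModSk: there are bijections, natural in all variables, between sketch morphisms 𝒮 ⊠ 𝒯 → 𝒞 and sketch morphisms 𝒮 → ModSk(𝒯, 𝒞), and between sketch morphisms 𝒮 ⊠ 𝒯 → 𝒞 and sketch morphisms 𝒯 → ModSk(𝒮, 𝒞). -/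
open CategoryTheory CategoryTheory.Limits

universe u

/-- A morphism of limit sketches: a functor carrying designated cones to designated cones. -/
structure SketchHom (𝒮 𝒯 : Sketch.{u}) where
  F : 𝒮.S ⥤ 𝒯.S
  maps_cones : ∀ c ∈ 𝒮.cones, c.map F ∈ 𝒯.cones

theorem SketchHom.ext' {𝒮 𝒯 : Sketch.{u}} {f g : SketchHom 𝒮 𝒯} (h : f.F = g.F) : f = g := by
  cases f; cases g; cases h; rfl

/-- The category `Sk` of small limit sketches and sketch morphisms. -/
instance : Category Sketch.{u} where
  Hom := SketchHom
  id 𝒮 := ⟨𝟭 𝒮.S, fun _ hc => hc⟩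
  comp f g := ⟨f.F ⋙ g.F, fun _ hc => g.maps_cones _ (f.maps_cones _ hc)⟩
  id_comp f := by apply SketchHom.ext'; exact Functor.id_comp _
  comp_id f := by apply SketchHom.ext'; exact Functor.comp_id _
  assoc f g h := by apply SketchHom.ext'; exact Functor.assoc _ _ _

/-- The unit sketch: the terminal category (a single object with only its identity) with no
designated cones. -/
def unitSketch : Sketch.{u} where
  S := Discrete PUnit.{u + 1}
  cones := ∅

/-- Models of a sketch in a sketch, i.e. sketch morphisms. -/
def IsSketchModel (𝒯 𝒞 : Sketch.{u}) (F : 𝒯.S ⥤ 𝒞.S) : Prop :=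
  ∀ c ∈ 𝒯.cones, c.map F ∈ 𝒞.cones

/-- The underlying category of the sketch of models. -/
abbrev ModSkCat (𝒯 𝒞 : Sketch.{u}) := ObjectProperty.FullSubcategory (IsSketchModel 𝒯 𝒞)

/-- Evaluation of models at an object `t`. -/
def evalSk (𝒯 𝒞 : Sketch.{u}) (t : 𝒯.S) : ModSkCat 𝒯 𝒞 ⥤ 𝒞.S :=
  ObjectProperty.ι (IsSketchModel 𝒯 𝒞) ⋙ (evaluation 𝒯.S 𝒞.S).obj t

/-- The sketch of models `ModSk(𝒯, 𝒞)`: the full subcategory of the functor category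
spanned by sketch morphisms `𝒯 → 𝒞`, with designated cones exactly those whose composite
with each evaluation functor is a designated cone of `𝒞`. -/
def ModSk (𝒯 𝒞 : Sketch.{u}) : Sketch.{u} where
  S := ModSkCat 𝒯 𝒞
  cones := { c | ∀ t : 𝒯.S, c.map (evalSk 𝒯 𝒞 t) ∈ 𝒞.cones }

/-- Functoriality of the sketch of models on underlying categories: precompose with `b` and
postcompose with `k`. -/
def ModSk.mapFunctor {𝒯' 𝒯 𝒞 𝒞' : Sketch.{u}} (b : 𝒯' ⟶ 𝒯) (k : 𝒞 ⟶ 𝒞') :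
    (ModSk 𝒯 𝒞).S ⥤ (ModSk 𝒯' 𝒞').S :=
  ObjectProperty.lift (IsSketchModel 𝒯' 𝒞')
    (ObjectProperty.ι (IsSketchModel 𝒯 𝒞) ⋙
      (Functor.whiskeringLeft 𝒯'.S 𝒯.S 𝒞.S).obj b.F ⋙ (Functor.whiskeringRight 𝒯'.S 𝒞.S 𝒞'.S).obj k.F)
    (fun G _ hc => k.maps_cones _ (G.property _ (b.maps_cones _ hc)))

/-- The action of the sketch of models on sketch morphisms (contravariant in the first
variable, covariant in the second), as a sketch morphism. -/
def ModSk.map {𝒯' 𝒯 𝒞 𝒞' : Sketch.{u}} (b : 𝒯' ⟶ 𝒯) (k : 𝒞 ⟶ 𝒞') :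
    ModSk 𝒯 𝒞 ⟶ ModSk 𝒯' 𝒞' where
  F := ModSk.mapFunctor b k
  maps_cones := fun _ hσ t' => k.maps_cones _ (hσ (b.F.obj t'))

/-! A functor `S × T ⥤ C` is a sketch morphism `𝒮 ⊠ 𝒯 → 𝒞` exactly when it is one separately
in each variable: fixing `t` gives a morphism `𝒮 → 𝒞`, fixing `s` one `𝒯 → 𝒞`. Under currying
the second condition says that `S ⥤ [T, C]` lands in the models of `𝒯`, and the first that it
carries designated cones of `𝒮` to cones designated pointwise, i.e. to designated cones of
`ModSk(𝒯, 𝒞)`. The associator, unitors and symmetry of the cartesian structure on `Cat` preserve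
designated cones, and all coherence equations already hold between the underlying functors; the
symmetry turns the first bijection into the second. -/

namespace CategoryTheory

universe v₁ v₂ v₃ v₄ v₅ v₆ u₁ u₂ u₃ u₄ u₅ u₆

variable {B : Type u₁} [Category.{v₁} B] {C : Type u₂} [Category.{v₂} C]
  {D : Type u₃} [Category.{v₃} D] {E : Type u₄} [Category.{v₄} E]

lemma Prod.sectL_comp_prod (F₁ : B ⥤ C) (F₂ : D ⥤ E) (d : D) :
    Prod.sectL B d ⋙ F₁.prod F₂ = F₁ ⋙ Prod.sectL C (F₂.obj d) :=
  Functor.hext (fun _ => rfl) (fun _ _ _ => heq_of_eq (by simp [Prod.sectL]))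

lemma Prod.sectR_comp_prod (F₁ : B ⥤ C) (F₂ : D ⥤ E) (b : B) :
    Prod.sectR b D ⋙ F₁.prod F₂ = F₂ ⋙ Prod.sectR (F₁.obj b) E :=
  Functor.hext (fun _ => rfl) (fun _ _ _ => heq_of_eq (by simp [Prod.sectR]))

lemma Functor.sectL_comp_uncurry_obj (G : B ⥤ C ⥤ D) (c : C) :
    Prod.sectL B c ⋙ uncurry.obj G = G ⋙ (evaluation C D).obj c :=
  Functor.hext (fun _ => rfl) (fun _ _ _ => heq_of_eq (by simp [Prod.sectL]))

lemma Functor.sectR_comp_uncurry_obj (G : B ⥤ C ⥤ D) (b : B) :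
    Prod.sectR b C ⋙ uncurry.obj G = G.obj b :=
  Functor.hext (fun _ => rfl) (fun _ _ _ => heq_of_eq (by simp [Prod.sectR]))

lemma Functor.curry_obj_prod_comp {H : Type u₅} [Category.{v₅} H] {I : Type u₆} [Category.{v₆} I]
    (F₁ : B ⥤ C) (F₂ : D ⥤ E) (G : C × E ⥤ H) (K : H ⥤ I) :
    curry.obj (F₁.prod F₂ ⋙ G ⋙ K) =
      F₁ ⋙ curry.obj G ⋙ (whiskeringLeft _ _ _).obj F₂ ⋙ (whiskeringRight _ _ _).obj K := by
  apply uncurry_obj_injective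
  rw [uncurry_obj_curry_obj, ← uncurry_obj_curry_obj_flip_flip' F₁ F₂ (G ⋙ K)]
  rfl

lemma ObjectProperty.functor_ext_of_comp_ι {P : ObjectProperty C} {F G : B ⥤ P.FullSubcategory}
    (h : F ⋙ P.ι = G ⋙ P.ι) : F = G :=
  show P.lift (F ⋙ P.ι) (fun X => (F.obj X).2) = P.lift (G ⋙ P.ι) (fun X => (G.obj X).2) by
    congr

end CategoryTheory

theorem IsSketchModel.comp {𝒮 𝒯 𝒞 : Sketch.{u}} {F : 𝒮.S ⥤ 𝒯.S} {G : 𝒯.S ⥤ 𝒞.S}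
    (hF : IsSketchModel 𝒮 𝒯 F) (hG : IsSketchModel 𝒯 𝒞 G) : IsSketchModel 𝒮 𝒞 (F ⋙ G) :=
  fun c hc => hG _ (hF c hc)

namespace Sketch

variable {𝒮 𝒯 𝒞 𝒮' 𝒯' : Sketch.{u}}

theorem isSketchModel_sectL (t : 𝒯.S) : IsSketchModel 𝒮 (𝒮.tensor 𝒯) (Prod.sectL 𝒮.S t) :=
  fun c hc => Or.inl (Set.mem_iUnion.2 ⟨t, c, hc, rfl⟩)

theorem isSketchModel_sectR (s : 𝒮.S) : IsSketchModel 𝒯 (𝒮.tensor 𝒯) (Prod.sectR s 𝒯.S) :=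
  fun c hc => Or.inr (Set.mem_iUnion.2 ⟨s, c, hc, rfl⟩)

theorem isSketchModel_tensor_iff (F : 𝒮.S × 𝒯.S ⥤ 𝒞.S) :
    IsSketchModel (𝒮.tensor 𝒯) 𝒞 F ↔
      (∀ t, IsSketchModel 𝒮 𝒞 (Prod.sectL 𝒮.S t ⋙ F)) ∧
        ∀ s, IsSketchModel 𝒯 𝒞 (Prod.sectR s 𝒯.S ⋙ F) := by
  refine ⟨fun hF => ⟨fun t => (isSketchModel_sectL t).comp hF,
    fun s => (isSketchModel_sectR s).comp hF⟩, ?_⟩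
  rintro ⟨hL, hR⟩ c (hc | hc)
  · obtain ⟨t, d, hd, rfl⟩ := Set.mem_iUnion.1 hc
    exact hL t d hd
  · obtain ⟨s, d, hd, rfl⟩ := Set.mem_iUnion.1 hc
    exact hR s d hd

def homOfTensor (F : 𝒮.S × 𝒯.S ⥤ 𝒞.S) (hL : ∀ t, IsSketchModel 𝒮 𝒞 (Prod.sectL 𝒮.S t ⋙ F))
    (hR : ∀ s, IsSketchModel 𝒯 𝒞 (Prod.sectR s 𝒯.S ⋙ F)) : 𝒮.tensor 𝒯 ⟶ 𝒞 :=
  ⟨F, (isSketchModel_tensor_iff F).2 ⟨hL, hR⟩⟩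

def tensorHom (a : 𝒮 ⟶ 𝒮') (b : 𝒯 ⟶ 𝒯') : 𝒮.tensor 𝒯 ⟶ 𝒮'.tensor 𝒯' :=
  homOfTensor (a.F.prod b.F)
    (fun t => by
      erw [Prod.sectL_comp_prod]
      exact IsSketchModel.comp a.maps_cones (isSketchModel_sectL _))
    (fun s => by
      erw [Prod.sectR_comp_prod]
      exact IsSketchModel.comp b.maps_cones (isSketchModel_sectR _))

def associator (𝒮 𝒯 𝒰 : Sketch.{u}) : (𝒮.tensor 𝒯).tensor 𝒰 ≅ 𝒮.tensor (𝒯.tensor 𝒰) where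
  hom := homOfTensor (prod.associator _ _ _)
    (fun u => (isSketchModel_tensor_iff _).2
      ⟨fun t => isSketchModel_sectL (𝒯 := 𝒯.tensor 𝒰) (t, u),
       fun s => (isSketchModel_sectL u).comp (isSketchModel_sectR s)⟩)
    (fun p => (isSketchModel_sectR p.2).comp (isSketchModel_sectR p.1))
  inv := homOfTensor (prod.inverseAssociator _ _ _)
    (fun p => (isSketchModel_sectL p.1).comp (isSketchModel_sectL p.2))
    (fun s => (isSketchModel_tensor_iff _).2
      ⟨fun u => (isSketchModel_sectR s).comp (isSketchModel_sectL u),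
       fun t => isSketchModel_sectR (𝒮 := 𝒮.tensor 𝒯) (s, t)⟩)
  hom_inv_id := SketchHom.ext' rfl
  inv_hom_id := SketchHom.ext' rfl

def leftUnitor (𝒮 : Sketch.{u}) : unitSketch.tensor 𝒮 ≅ 𝒮 where
  hom := homOfTensor (CategoryTheory.Prod.snd _ _)
    (fun _ c hc => absurd hc (Set.notMem_empty c)) (fun _ _ hc => hc)
  inv := ⟨Prod.sectR ⟨PUnit.unit⟩ _, isSketchModel_sectR _⟩
  hom_inv_id := SketchHom.ext' rfl
  inv_hom_id := SketchHom.ext' rfl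

def rightUnitor (𝒮 : Sketch.{u}) : 𝒮.tensor unitSketch ≅ 𝒮 where
  hom := homOfTensor (CategoryTheory.Prod.fst _ _)
    (fun _ _ hc => hc) (fun _ c hc => absurd hc (Set.notMem_empty c))
  inv := ⟨Prod.sectL _ ⟨PUnit.unit⟩, isSketchModel_sectL _⟩
  hom_inv_id := SketchHom.ext' rfl
  inv_hom_id := SketchHom.ext' rfl

instance monoidalCategoryStruct : MonoidalCategoryStruct Sketch.{u} where
  tensorObj := tensor
  tensorHom := tensorHom
  whiskerLeft 𝒮 _ _ b := tensorHom (𝟙 𝒮) b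
  whiskerRight a 𝒯 := tensorHom a (𝟙 𝒯)
  tensorUnit := unitSketch
  associator := associator
  leftUnitor := leftUnitor
  rightUnitor := rightUnitor

instance monoidalCategory : MonoidalCategory Sketch.{u} :=
  .ofTensorHom
    (id_tensorHom_id := fun _ _ => SketchHom.ext' rfl)
    (id_tensorHom := by intros; exact SketchHom.ext' rfl)
    (tensorHom_id := by intros; exact SketchHom.ext' rfl)
    (tensorHom_comp_tensorHom := fun _ _ _ _ => SketchHom.ext' rfl)
    (associator_naturality := fun _ _ _ => SketchHom.ext' rfl)
    (leftUnitor_naturality := fun _ => SketchHom.ext' rfl)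
    (rightUnitor_naturality := fun _ => SketchHom.ext' rfl)
    (pentagon := fun _ _ _ _ => SketchHom.ext' rfl)
    (triangle := fun _ _ => SketchHom.ext' rfl)

def curryEquiv (𝒮 𝒯 𝒞 : Sketch.{u}) : (𝒮.tensor 𝒯 ⟶ 𝒞) ≃ (𝒮 ⟶ ModSk 𝒯 𝒞) where
  toFun f :=
    { F := ObjectProperty.lift _ (Functor.curry.obj f.F)
        (fun s => (isSketchModel_sectR s).comp f.maps_cones)
      maps_cones := fun c hc t => (isSketchModel_sectL t).comp f.maps_cones c hc }
  invFun g := homOfTensor (Functor.uncurry.obj (g.F ⋙ ObjectProperty.ι _))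
    (fun t => by
      erw [Functor.sectL_comp_uncurry_obj]
      exact fun c hc => g.maps_cones c hc t)
    (fun s => by
      erw [Functor.sectR_comp_uncurry_obj]
      exact (g.F.obj s).property)
  left_inv f := SketchHom.ext' (Functor.uncurry_obj_curry_obj f.F)
  right_inv g :=
    SketchHom.ext' (ObjectProperty.functor_ext_of_comp_ι (Functor.curry_obj_uncurry_obj _))

theorem curryEquiv_naturality {𝒞 𝒞' : Sketch.{u}} (a : 𝒮' ⟶ 𝒮) (b : 𝒯' ⟶ 𝒯) (k : 𝒞 ⟶ 𝒞')
    (f : 𝒮.tensor 𝒯 ⟶ 𝒞) :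
    curryEquiv 𝒮' 𝒯' 𝒞' (tensorHom a b ≫ f ≫ k) = a ≫ curryEquiv 𝒮 𝒯 𝒞 f ≫ ModSk.map b k :=
  SketchHom.ext' (ObjectProperty.functor_ext_of_comp_ι
    (Functor.curry_obj_prod_comp a.F b.F f.F k.F))

def swap (𝒮 𝒯 : Sketch.{u}) : 𝒮.tensor 𝒯 ⟶ 𝒯.tensor 𝒮 :=
  homOfTensor (CategoryTheory.Prod.swap _ _) isSketchModel_sectR isSketchModel_sectL

def braiding (𝒮 𝒯 : Sketch.{u}) : 𝒮.tensor 𝒯 ≅ 𝒯.tensor 𝒮 :=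
  ⟨swap 𝒮 𝒯, swap 𝒯 𝒮, SketchHom.ext' rfl, SketchHom.ext' rfl⟩

def flipCurryEquiv (𝒮 𝒯 𝒞 : Sketch.{u}) : (𝒮.tensor 𝒯 ⟶ 𝒞) ≃ (𝒯 ⟶ ModSk 𝒮 𝒞) :=
  (braiding 𝒮 𝒯).homFromEquiv.trans (curryEquiv 𝒯 𝒮 𝒞)

theorem flipCurryEquiv_naturality {𝒞 𝒞' : Sketch.{u}} (a : 𝒮' ⟶ 𝒮) (b : 𝒯' ⟶ 𝒯)
    (k : 𝒞 ⟶ 𝒞') (f : 𝒮.tensor 𝒯 ⟶ 𝒞) :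
    flipCurryEquiv 𝒮' 𝒯' 𝒞' (tensorHom a b ≫ f ≫ k) =
      b ≫ flipCurryEquiv 𝒮 𝒯 𝒞 f ≫ ModSk.map a k :=
  (congrArg (curryEquiv 𝒯' 𝒮' 𝒞') (SketchHom.ext' rfl)).trans
    (curryEquiv_naturality b a k ((braiding 𝒮 𝒯).homFromEquiv f))

end Sketch

/-- The category of small limit sketches carries a monoidal structure with
tensor `⊠` and unit the terminal sketch with no designated cones; it is closed with internal
hom `ModSk`, via bijections between sketch morphisms `𝒮 ⊠ 𝒯 → 𝒞` and `𝒮 → ModSk(𝒯, 𝒞)`,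
respectively `𝒯 → ModSk(𝒮, 𝒞)`, natural in all variables. -/
theorem stmt3 :
    ∃ M : MonoidalCategory Sketch.{u},
      (∀ 𝒮 𝒯 : Sketch.{u}, M.tensorObj 𝒮 𝒯 = 𝒮.tensor 𝒯) ∧
      M.tensorUnit = unitSketch.{u} ∧
      ∃ (eL : ∀ 𝒮 𝒯 𝒞 : Sketch.{u}, (M.tensorObj 𝒮 𝒯 ⟶ 𝒞) ≃ (𝒮 ⟶ ModSk 𝒯 𝒞))
        (eR : ∀ 𝒮 𝒯 𝒞 : Sketch.{u}, (M.tensorObj 𝒮 𝒯 ⟶ 𝒞) ≃ (𝒯 ⟶ ModSk 𝒮 𝒞)),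
        (∀ (𝒮' 𝒮 𝒯' 𝒯 𝒞 𝒞' : Sketch.{u}) (a : 𝒮' ⟶ 𝒮) (b : 𝒯' ⟶ 𝒯) (k : 𝒞 ⟶ 𝒞')
          (f : M.tensorObj 𝒮 𝒯 ⟶ 𝒞),
          eL 𝒮' 𝒯' 𝒞' (M.tensorHom a b ≫ f ≫ k) =
            a ≫ eL 𝒮 𝒯 𝒞 f ≫ ModSk.map b k) ∧
        (∀ (𝒮' 𝒮 𝒯' 𝒯 𝒞 𝒞' : Sketch.{u}) (a : 𝒮' ⟶ 𝒮) (b : 𝒯' ⟶ 𝒯) (k : 𝒞 ⟶ 𝒞')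
          (f : M.tensorObj 𝒮 𝒯 ⟶ 𝒞),
          eR 𝒮' 𝒯' 𝒞' (M.tensorHom a b ≫ f ≫ k) =
            b ≫ eR 𝒮 𝒯 𝒞 f ≫ ModSk.map a k) :=
  ⟨Sketch.monoidalCategory, fun _ _ => rfl, rfl, Sketch.curryEquiv, Sketch.flipCurryEquiv,
    fun _ _ _ _ _ _ => Sketch.curryEquiv_naturality,
    fun _ _ _ _ _ _ => Sketch.flipCurryEquiv_naturality⟩
end

section
/- Let V and W be monoidal closed categories and F : V ⥤ W a lax monoidal functor. Then the object assignment X ↦ F(X), together with the canonical comparison morphisms m_{X,Y} : F([X, Y]_V) ⟶ [F X, F Y]_W on hom-objects, defines a W-enriched functor from the W-enriched category F₊V (the transport along F of the self-enrichment of V) to the self-enrichment of W; that is, the comparisons m_{X,Y} are compatible with the enriched identity elements and with enriched composition. -/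
/-! Uncurried, the comparison `m` satisfies `F X ◁ m ≫ ev = μ ≫ F.map ev`, hence
`F.map (curry f) ≫ m = curry (μ ≫ F.map f)`. The identities and compositions of a
self-enrichment are curried maps, so both axioms become equations between uncurried maps:
for identities this is right unitality of `F`; for composition, associativity of `μ` rewrites
the uncurried composite `F X ◁ μ ≫ μ ≫ F.map (α⁻¹ ≫ ev ▷ _ ≫ ev)` as
`α⁻¹ ≫ (μ ≫ F.map ev) ▷ _ ≫ μ ≫ F.map ev`, which the characterisation of `m`, applied to each
factor, identifies with the uncurried composition of `W`. -/

open CategoryTheory CategoryTheory.MonoidalCategory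
open scoped MonoidalClosed

universe v₁ v₂ u₁ u₂

namespace CategoryTheory

lemma MonoidalClosed.whiskerLeft_tensorHom_comp_compTranspose {C : Type*} [Category C]
    [MonoidalCategory C] [MonoidalClosed C] {A B X Y Z : C} (f : A ⟶ (ihom X).obj Y)
    (g : B ⟶ (ihom Y).obj Z) :
    X ◁ (f ⊗ₘ g) ≫ compTranspose X Y Z =
      (α_ _ _ _).inv ≫ (X ◁ f ≫ (ihom.ev X).app Y) ▷ B ≫ Y ◁ g ≫ (ihom.ev Y).app Z := by
  rw [compTranspose_eq, MonoidalCategory.tensorHom_def, MonoidalCategory.whiskerLeft_comp_assoc,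
    associator_inv_naturality_right_assoc, whisker_exchange_assoc,
    associator_inv_naturality_middle_assoc, ← comp_whiskerRight_assoc]
  rfl

open MonoidalClosed in
lemma Functor.LaxMonoidal.whiskerLeft_μ_comp_map_compTranspose {C D : Type*} [Category C]
    [MonoidalCategory C] [MonoidalClosed C] [Category D] [MonoidalCategory D] (F : C ⥤ D)
    [F.LaxMonoidal] (X Y Z : C) :
    F.obj X ◁ μ F ((ihom X).obj Y) ((ihom Y).obj Z) ≫ μ F _ _ ≫ F.map (compTranspose X Y Z) =
      (α_ _ _ _).inv ≫ (μ F X _ ≫ F.map ((ihom.ev X).app Y)) ▷ _ ≫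
        μ F Y _ ≫ F.map ((ihom.ev Y).app Z) := by
  rw [compTranspose_eq, F.map_comp, F.map_comp, associativity_inv_assoc,
    ← μ_natural_left_assoc, comp_whiskerRight_assoc]
  rfl

end CategoryTheory

noncomputable section

variable {V : Type u₁} [Category.{v₁} V] [MonoidalCategory V] [MonoidalClosed V]
  {W : Type u₂} [Category.{v₂} W] [MonoidalCategory W] [MonoidalClosed W]

/-- The comparison `m_{X,Y} : F([X, Y]_V) ⟶ [F X, F Y]_W`. -/
def laxComparison (F : V ⥤ W) [F.LaxMonoidal] (X Y : V) :
    F.obj ((ihom X).obj Y) ⟶ (ihom (F.obj X)).obj (F.obj Y) :=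
  MonoidalClosed.curry
    (Functor.LaxMonoidal.μ F X ((ihom X).obj Y) ≫ F.map ((ihom.ev X).app Y))

namespace laxComparison

open MonoidalClosed Functor.LaxMonoidal

variable (F : V ⥤ W) [F.LaxMonoidal]

lemma whiskerLeft_ihom_ev_app (X Y : V) :
    F.obj X ◁ laxComparison F X Y ≫ (ihom.ev (F.obj X)).app (F.obj Y) =
      μ F X ((ihom X).obj Y) ≫ F.map ((ihom.ev X).app Y) :=
  whiskerLeft_curry_ihom_ev_app ..

lemma map_curry_comp {A X Y : V} (f : X ⊗ A ⟶ Y) :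
    F.map (curry f) ≫ laxComparison F X Y = curry (μ F X A ≫ F.map f) := by
  rw [laxComparison, ← curry_natural_left, μ_natural_right_assoc, ← F.map_comp,
    whiskerLeft_curry_ihom_ev_app]

lemma map_id_comp (X : V) :
    (ε F ≫ F.map (MonoidalClosed.id X)) ≫ laxComparison F X X =
      MonoidalClosed.id (F.obj X) := by
  rw [Category.assoc, MonoidalClosed.id_eq, MonoidalClosed.id_eq, map_curry_comp,
    ← curry_natural_left, right_unitality]

lemma map_comp_comp (X Y Z : V) :
    (μ F _ _ ≫ F.map (comp X Y Z)) ≫ laxComparison F X Z =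
      (laxComparison F X Y ⊗ₘ laxComparison F Y Z) ≫ comp _ _ _ := by
  rw [Category.assoc, comp_eq, comp_eq, map_curry_comp, ← curry_natural_left,
    ← curry_natural_left, whiskerLeft_μ_comp_map_compTranspose,
    whiskerLeft_tensorHom_comp_compTranspose, whiskerLeft_ihom_ev_app, whiskerLeft_ihom_ev_app]

end laxComparison

/-- For a lax monoidal functor `F : V ⥤ W` between monoidal closed
categories, the object assignment `X ↦ F X` together with the canonical comparison morphisms
`F([X, Y]_V) ⟶ [F X, F Y]_W` defines a `W`-enriched functor from the transported enrichment
`F₊V` of the self-enrichment of `V` to the self-enrichment of `W`; that is, the comparison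
morphisms are compatible with the enriched identity elements and with enriched composition
(the two axioms of a `W`-enriched functor, with object map `X ↦ F X`). -/
theorem stmt9 (F : V ⥤ W) [F.LaxMonoidal] :
    (∀ X : V,
      eId W (C := TransportEnrichment F V) X ≫ laxComparison F X X = eId W (F.obj X)) ∧
    (∀ X Y Z : V,
      eComp W (C := TransportEnrichment F V) X Y Z ≫ laxComparison F X Z =
        (laxComparison F X Y ⊗ₘ laxComparison F Y Z) ≫
          eComp W (F.obj X) (F.obj Y) (F.obj Z)) :=
  ⟨laxComparison.map_id_comp F, laxComparison.map_comp_comp F⟩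

end
end
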